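/- arXiv:1510.00793 — 4 statements merged into one kernel-verified Lean document; each statement's English description precedes it below -/
import Mathlib

section
/- Let {α, S₀, ϑ1, ϑ2} be an admissible quadruple of order n such that the pair {α, ϑ1} is controllable. Then every eigenvalue λ of α satisfies Im λ > 0. -/
/-! Take a left eigenvector `w* α = λ w*`. Sandwiching the admissibility identity between `w*`
and `w` gives `2 Im λ · w* S₀ w = ‖ϑ1* w‖² + ‖ϑ2* w‖²`. Since `w* α^k ϑ1 = λ^k w* ϑ1` and the
columns of the `α^k ϑ1` span `ℂⁿ`, controllability forces `ϑ1* w ≠ 0`; as `S₀ > 0`, this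
gives `Im λ > 0`. -/

open Matrix Filter
open scoped ComplexOrder

noncomputable section

/-- The pair `{α, ϑ}` is controllable: the columns of `ϑ, αϑ, …, α^(n−1)ϑ` span `ℂⁿ`. -/
def Controllable {n m : ℕ} (α : Matrix (Fin n) (Fin n) ℂ)
    (ϑ : Matrix (Fin n) (Fin m) ℂ) : Prop :=
  Submodule.span ℂ
    {v : Fin n → ℂ | ∃ k < n, ∃ c : Fin m, v = fun r => (α ^ k * ϑ) r c} = ⊤

/-- `j = diag(I_{m1}, −I_{m2})`. -/
def jmat (m1 m2 : ℕ) : Matrix (Fin m1 ⊕ Fin m2) (Fin m1 ⊕ Fin m2) ℂ :=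
  Matrix.fromBlocks 1 0 0 (-1)

/-- The quadruple `{α, S₀, ϑ1, ϑ2}` is admissible: `S₀ > 0` and
`α S₀ − S₀ α* = i(ϑ1 ϑ1* + ϑ2 ϑ2*)`. -/
def Admissible {n m1 m2 : ℕ} (α S₀ : Matrix (Fin n) (Fin n) ℂ)
    (ϑ1 : Matrix (Fin n) (Fin m1) ℂ) (ϑ2 : Matrix (Fin n) (Fin m2) ℂ) : Prop :=
  S₀.PosDef ∧ α * S₀ - S₀ * αᴴ = Complex.I • (ϑ1 * ϑ1ᴴ + ϑ2 * ϑ2ᴴ)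

namespace Matrix

variable {n : Type*} [Fintype n]

theorem exists_vecMul_eq_smul_of_mem_spectrum [DecidableEq n] {K : Type*} [Field K]
    {A : Matrix n n K} {lam : K} (h : lam ∈ spectrum K A) : ∃ w ≠ 0, w ᵥ* A = lam • w := by
  rw [mem_spectrum_iff_isRoot_charpoly, Polynomial.IsRoot, eval_charpoly] at h
  obtain ⟨w, hw0, hw⟩ := exists_vecMul_eq_zero_iff.mpr h
  refine ⟨w, hw0, ?_⟩
  rw [vecMul_sub, sub_eq_zero] at hw
  simpa using hw.symm

theorem vecMul_pow_eq_smul {R : Type*} [CommSemiring R] [DecidableEq n]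
    {A : Matrix n n R} {w : n → R} {lam : R} (h : w ᵥ* A = lam • w) (k : ℕ) :
    w ᵥ* A ^ k = lam ^ k • w := by
  induction k with
  | zero => simp
  | succ k ih => rw [pow_succ, ← vecMul_vecMul, ih, smul_vecMul, h, smul_smul, pow_succ]

theorem dotProduct_mul_sub_mul_conjTranspose_mulVec_star {R : Type*} [CommRing R]
    [StarRing R] {A : Matrix n n R} {w : n → R} {lam : R} (hw : w ᵥ* A = lam • w)
    (S : Matrix n n R) :
    w ⬝ᵥ (A * S - S * Aᴴ) *ᵥ star w = (lam - star lam) * (w ⬝ᵥ S *ᵥ star w) := by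
  have hAH : Aᴴ *ᵥ star w = star lam • star w := by rw [← star_vecMul, hw, star_smul]
  rw [sub_mulVec, dotProduct_sub, ← mulVec_mulVec, ← mulVec_mulVec, dotProduct_mulVec w A, hw,
    hAH, mulVec_smul, dotProduct_smul, smul_dotProduct, smul_eq_mul, smul_eq_mul]
  ring

theorem dotProduct_mul_conjTranspose_mulVec_star {R : Type*} [CommSemiring R]
    [StarRing R] {m : Type*} [Fintype m] (B : Matrix n m R) (w : n → R) :
    w ⬝ᵥ (B * Bᴴ) *ᵥ star w = w ᵥ* B ⬝ᵥ star (w ᵥ* B) := by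
  rw [← mulVec_mulVec, dotProduct_mulVec, star_vecMul]

end Matrix

theorem Controllable.eq_zero_of_vecMul_eq_smul {n m : ℕ} {α : Matrix (Fin n) (Fin n) ℂ}
    {ϑ : Matrix (Fin n) (Fin m) ℂ} (hc : Controllable α ϑ) {w : Fin n → ℂ} {lam : ℂ}
    (hw : w ᵥ* α = lam • w) (hϑ : w ᵥ* ϑ = 0) : w = 0 := by
  have hspan : Submodule.span ℂ {v : Fin n → ℂ | ∃ k < n, ∃ c : Fin m,
      v = fun r => (α ^ k * ϑ) r c} ≤ LinearMap.ker (dotProductBilin ℂ ℂ w) := by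
    rw [Submodule.span_le]
    rintro _ ⟨k, -, c, rfl⟩
    have hcol : (fun r => (α ^ k * ϑ) r c) = (α ^ k * ϑ) *ᵥ Pi.single c 1 :=
      (mulVec_single_one (α ^ k * ϑ) c).symm
    rw [SetLike.mem_coe, LinearMap.mem_ker, dotProductBilin_apply_apply, hcol, dotProduct_mulVec,
      ← vecMul_vecMul, vecMul_pow_eq_smul hw, smul_vecMul, hϑ, smul_zero, zero_dotProduct]
  rw [hc] at hspan
  exact dotProduct_eq_zero_iff.mp fun x => hspan Submodule.mem_top

theorem Admissible.two_mul_im_mul_dotProduct_eq {n m1 m2 : ℕ} {α S₀ : Matrix (Fin n) (Fin n) ℂ}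
    {ϑ1 : Matrix (Fin n) (Fin m1) ℂ} {ϑ2 : Matrix (Fin n) (Fin m2) ℂ}
    (hadm : Admissible α S₀ ϑ1 ϑ2) {w : Fin n → ℂ} {lam : ℂ} (hw : w ᵥ* α = lam • w) :
    ((2 * lam.im : ℝ) : ℂ) * (w ⬝ᵥ S₀ *ᵥ star w) =
      w ᵥ* ϑ1 ⬝ᵥ star (w ᵥ* ϑ1) + w ᵥ* ϑ2 ⬝ᵥ star (w ᵥ* ϑ2) := by
  have h := congrArg (fun M => w ⬝ᵥ M *ᵥ star w) hadm.2
  simp only [dotProduct_mul_sub_mul_conjTranspose_mulVec_star hw, smul_mulVec, dotProduct_smul,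
    add_mulVec, dotProduct_add, dotProduct_mul_conjTranspose_mulVec_star, smul_eq_mul] at h
  rw [Complex.star_def, Complex.sub_conj] at h
  exact mul_left_cancel₀ Complex.I_ne_zero (by linear_combination h)

/-- Every eigenvalue of `α` from an admissible quadruple with `{α, ϑ1}` controllable
lies in the open upper half-plane. -/
theorem spectrum_subset_upper_halfPlane {n m1 m2 : ℕ}
    (α S₀ : Matrix (Fin n) (Fin n) ℂ)
    (ϑ1 : Matrix (Fin n) (Fin m1) ℂ) (ϑ2 : Matrix (Fin n) (Fin m2) ℂ)
    (hadm : Admissible α S₀ ϑ1 ϑ2) (hc : Controllable α ϑ1) :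
    ∀ lam ∈ spectrum ℂ α, 0 < lam.im := by
  intro lam hlam
  obtain ⟨w, hw0, hw⟩ := exists_vecMul_eq_smul_of_mem_spectrum hlam
  have hS₀ : 0 < w ⬝ᵥ S₀ *ᵥ star w := by
    simpa using hadm.1.dotProduct_mulVec_pos (star_ne_zero.mpr hw0)
  have hϑ1 : 0 < w ᵥ* ϑ1 ⬝ᵥ star (w ᵥ* ϑ1) :=
    dotProduct_self_star_pos_iff.mpr fun h => hw0 (hc.eq_zero_of_vecMul_eq_smul hw h)
  have hϑ2 : 0 ≤ w ᵥ* ϑ2 ⬝ᵥ star (w ᵥ* ϑ2) := dotProduct_self_star_nonneg _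
  have hpos : 0 < ((2 * lam.im : ℝ) : ℂ) * (w ⬝ᵥ S₀ *ᵥ star w) := by
    rw [hadm.two_mul_im_mul_dotProduct_eq hw]
    exact add_pos_of_pos_of_nonneg hϑ1 hϑ2
  linarith [Complex.zero_lt_real.mp (pos_of_mul_pos_left hpos hS₀.le)]

end
end

section
/- Let {α, S₀, ϑ1, ϑ2} be an admissible quadruple of order n such that 0 ∉ σ(α) and i ∉ σ(α) (σ denoting the spectrum). Then the matrices S_k defined recursively by S_0 := S₀, S_{k+1} := S_k + α^{−1} S_k (α*)^{−1} + α^{−1} Λ_k j Λ_k* (α*)^{−1} are Hermitian positive definite for every k ∈ ℕ₀; in particular the quadruple generates a well-defined potential {C_k}. -/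
open Matrix Filter
open scoped ComplexOrder

noncomputable section

/-- `Λ_0 = [ϑ1, ϑ2]`, `Λ_{k+1} = Λ_k + i α⁻¹ Λ_k j`. -/
def LamSeq {n m1 m2 : ℕ} (α : Matrix (Fin n) (Fin n) ℂ)
    (ϑ1 : Matrix (Fin n) (Fin m1) ℂ) (ϑ2 : Matrix (Fin n) (Fin m2) ℂ) :
    ℕ → Matrix (Fin n) (Fin m1 ⊕ Fin m2) ℂ
  | 0 => Matrix.fromCols ϑ1 ϑ2
  | k + 1 => LamSeq α ϑ1 ϑ2 k + Complex.I • (α⁻¹ * LamSeq α ϑ1 ϑ2 k * jmat m1 m2)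

/-- `S_0 = S₀`, `S_{k+1} = S_k + α⁻¹ S_k (α*)⁻¹ + α⁻¹ Λ_k j Λ_k* (α*)⁻¹`. -/
def SSeq {n m1 m2 : ℕ} (α S₀ : Matrix (Fin n) (Fin n) ℂ)
    (ϑ1 : Matrix (Fin n) (Fin m1) ℂ) (ϑ2 : Matrix (Fin n) (Fin m2) ℂ) :
    ℕ → Matrix (Fin n) (Fin n) ℂ
  | 0 => S₀
  | k + 1 => SSeq α S₀ ϑ1 ϑ2 k + α⁻¹ * SSeq α S₀ ϑ1 ϑ2 k * (αᴴ)⁻¹ +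
      α⁻¹ * (LamSeq α ϑ1 ϑ2 k * jmat m1 m2 * (LamSeq α ϑ1 ϑ2 k)ᴴ) * (αᴴ)⁻¹

/-- The generated potential `C_k = j + Λ_k* S_k⁻¹ Λ_k − Λ_{k+1}* S_{k+1}⁻¹ Λ_{k+1}`. -/
def CSeq {n m1 m2 : ℕ} (α S₀ : Matrix (Fin n) (Fin n) ℂ)
    (ϑ1 : Matrix (Fin n) (Fin m1) ℂ) (ϑ2 : Matrix (Fin n) (Fin m2) ℂ) (k : ℕ) :
    Matrix (Fin m1 ⊕ Fin m2) (Fin m1 ⊕ Fin m2) ℂ :=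
  jmat m1 m2 + (LamSeq α ϑ1 ϑ2 k)ᴴ * (SSeq α S₀ ϑ1 ϑ2 k)⁻¹ * LamSeq α ϑ1 ϑ2 k -
    (LamSeq α ϑ1 ϑ2 (k + 1))ᴴ * (SSeq α S₀ ϑ1 ϑ2 (k + 1))⁻¹ * LamSeq α ϑ1 ϑ2 (k + 1)

/-!
Both the Sylvester identity `αS_k − S_kα* = iΛ_kΛ_k*` and positivity propagate along the
recursion. The identity propagates because `j* = j` and `j² = 1`; using it, the recursion
can be rewritten as
`S_{k+1} = (I − iα⁻¹) S_k (I − iα⁻¹)* + α⁻¹Λ_k (j + I) Λ_k*(α*)⁻¹`.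
Here `I − iα⁻¹ = α⁻¹(α − iI)` is invertible because `i ∉ σ(α)`, so the first term is
positive definite, and `j + I = diag(2I, 0)` makes the second positive semidefinite.
-/

section SylvesterStep

open Complex

variable {n m : Type*} [Fintype n] [DecidableEq n] [Fintype m] [DecidableEq m]

theorem isUnit_one_sub_smul_inv {α : Matrix n n ℂ} {z : ℂ} (hα : IsUnit α)
    (hz : z ∉ spectrum ℂ α) : IsUnit (1 - z • α⁻¹) := by
  have hd := (isUnit_iff_isUnit_det α).mp hα
  have hfac : 1 - z • α⁻¹ = -(α⁻¹ * (algebraMap ℂ _ z - α)) := by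
    rw [Algebra.algebraMap_eq_smul_one, Matrix.mul_sub, Matrix.mul_smul, Matrix.mul_one,
      nonsing_inv_mul _ hd, neg_sub]
  rw [hfac]
  exact ((isUnit_nonsing_inv_iff.mpr hα).mul (spectrum.notMem_iff.mp hz)).neg

theorem inv_mul_sub_mul_conjTranspose_mul {α : Matrix n n ℂ} (hα : IsUnit α)
    (Y : Matrix n n ℂ) : α⁻¹ * (α * Y - Y * αᴴ) * αᴴ⁻¹ = Y * αᴴ⁻¹ - α⁻¹ * Y := by
  have hd := (isUnit_iff_isUnit_det α).mp hα
  have hdH : IsUnit αᴴ.det := by rw [det_conjTranspose]; exact hd.star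
  simp only [Matrix.mul_sub, Matrix.sub_mul, ← Matrix.mul_assoc, nonsing_inv_mul _ hd,
    Matrix.one_mul]
  simp only [Matrix.mul_assoc, mul_nonsing_inv _ hdH, Matrix.mul_one]

theorem mul_inv_mul_mul_sub {α : Matrix n n ℂ} (hα : IsUnit α) (Y : Matrix n n ℂ) :
    α * (α⁻¹ * Y * αᴴ⁻¹) - α⁻¹ * Y * αᴴ⁻¹ * αᴴ = Y * αᴴ⁻¹ - α⁻¹ * Y := by
  have hd := (isUnit_iff_isUnit_det α).mp hα
  have hdH : IsUnit αᴴ.det := by rw [det_conjTranspose]; exact hd.star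
  simp only [← Matrix.mul_assoc, mul_nonsing_inv _ hd, Matrix.one_mul]
  simp only [Matrix.mul_assoc, nonsing_inv_mul _ hdH, Matrix.mul_one]

theorem add_I_smul_mul_conjTranspose {α : Matrix n n ℂ} {Λ : Matrix n m ℂ} {J : Matrix m m ℂ}
    (hJ : Jᴴ = J) (hJJ : J * J = 1) :
    (Λ + I • (α⁻¹ * Λ * J)) * (Λ + I • (α⁻¹ * Λ * J))ᴴ =
      Λ * Λᴴ + α⁻¹ * (Λ * Λᴴ) * αᴴ⁻¹ - I • (Λ * J * Λᴴ * αᴴ⁻¹ - α⁻¹ * (Λ * J * Λᴴ)) := by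
  have hJJ' : ∀ X : Matrix m n ℂ, J * (J * X) = X := fun X => by
    rw [← Matrix.mul_assoc, hJJ, Matrix.one_mul]
  simp only [conjTranspose_add, conjTranspose_smul, conjTranspose_mul, hJ,
    conjTranspose_nonsing_inv, star_def, conj_I, Matrix.add_mul, Matrix.mul_add,
    Matrix.smul_mul, Matrix.mul_smul, Matrix.mul_assoc, hJJ']
  match_scalars <;> ring_nf
  simp [I_sq]

theorem sylvester_step {α S : Matrix n n ℂ} {Λ : Matrix n m ℂ} {J : Matrix m m ℂ}
    (hα : IsUnit α) (hJ : Jᴴ = J) (hJJ : J * J = 1)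
    (h : α * S - S * αᴴ = I • (Λ * Λᴴ)) :
    α * (S + α⁻¹ * S * αᴴ⁻¹ + α⁻¹ * (Λ * J * Λᴴ) * αᴴ⁻¹)
        - (S + α⁻¹ * S * αᴴ⁻¹ + α⁻¹ * (Λ * J * Λᴴ) * αᴴ⁻¹) * αᴴ =
      I • ((Λ + I • (α⁻¹ * Λ * J)) * (Λ + I • (α⁻¹ * Λ * J))ᴴ) := by
  have hS := inv_mul_sub_mul_conjTranspose_mul hα S
  rw [h] at hS
  calc
    _ = (α * S - S * αᴴ) + (α * (α⁻¹ * S * αᴴ⁻¹) - α⁻¹ * S * αᴴ⁻¹ * αᴴ) +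
        (α * (α⁻¹ * (Λ * J * Λᴴ) * αᴴ⁻¹) - α⁻¹ * (Λ * J * Λᴴ) * αᴴ⁻¹ * αᴴ) := by
      noncomm_ring
    _ = _ := by
      rw [mul_inv_mul_mul_sub hα, mul_inv_mul_mul_sub hα, ← hS, h,
        add_I_smul_mul_conjTranspose hJ hJJ]
      simp only [Matrix.mul_smul, Matrix.smul_mul]
      match_scalars <;> ring_nf <;> simp [I_sq]

theorem sylvester_step_eq_conj_add {α S : Matrix n n ℂ} {Λ : Matrix n m ℂ} (J : Matrix m m ℂ)
    (hα : IsUnit α) (h : α * S - S * αᴴ = I • (Λ * Λᴴ)) :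
    S + α⁻¹ * S * αᴴ⁻¹ + α⁻¹ * (Λ * J * Λᴴ) * αᴴ⁻¹ =
      (1 - I • α⁻¹) * S * (1 - I • α⁻¹)ᴴ + α⁻¹ * Λ * (J + 1) * (α⁻¹ * Λ)ᴴ := by
  have hS := inv_mul_sub_mul_conjTranspose_mul hα S
  rw [h] at hS
  symm
  calc
    _ = S + α⁻¹ * S * αᴴ⁻¹ + α⁻¹ * (Λ * J * Λᴴ) * αᴴ⁻¹ +
        (I • (S * αᴴ⁻¹ - α⁻¹ * S) + α⁻¹ * (Λ * Λᴴ) * αᴴ⁻¹) := by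
      simp only [conjTranspose_sub, conjTranspose_one, conjTranspose_smul, conjTranspose_mul,
        conjTranspose_nonsing_inv, star_def, conj_I, Matrix.add_mul, Matrix.mul_add,
        Matrix.sub_mul, Matrix.mul_sub, Matrix.smul_mul, Matrix.mul_smul, Matrix.mul_assoc,
        Matrix.one_mul, Matrix.mul_one]
      match_scalars <;> ring_nf
      simp [I_sq]
    _ = _ := by
      rw [← hS]
      simp only [Matrix.mul_smul, Matrix.smul_mul]
      match_scalars <;> ring_nf
      simp [I_sq]

theorem posDef_sylvester_step {α S : Matrix n n ℂ} {Λ : Matrix n m ℂ} {J : Matrix m m ℂ}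
    (hα : IsUnit α) (hI : I ∉ spectrum ℂ α) (hS : S.PosDef) (hJ : (J + 1).PosSemidef)
    (h : α * S - S * αᴴ = I • (Λ * Λᴴ)) :
    (S + α⁻¹ * S * αᴴ⁻¹ + α⁻¹ * (Λ * J * Λᴴ) * αᴴ⁻¹).PosDef := by
  rw [sylvester_step_eq_conj_add J hα h]
  exact (hS.mul_mul_conjTranspose_same
    (vecMul_injective_of_isUnit (isUnit_one_sub_smul_inv hα hI))).add_posSemidef
    (hJ.mul_mul_conjTranspose_same _)

end SylvesterStep

lemma jmat_conjTranspose (m1 m2 : ℕ) : (jmat m1 m2)ᴴ = jmat m1 m2 := by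
  simp [jmat, fromBlocks_conjTranspose]

lemma jmat_mul_jmat (m1 m2 : ℕ) : jmat m1 m2 * jmat m1 m2 = 1 := by
  simp [jmat, fromBlocks_multiply, ← fromBlocks_one]

lemma posSemidef_jmat_add_one (m1 m2 : ℕ) : (jmat m1 m2 + 1).PosSemidef := by
  have hdiag : jmat m1 m2 + 1 = diagonal (Sum.elim 2 0) := by
    rw [jmat, ← fromBlocks_one, fromBlocks_add, neg_add_cancel, add_zero, zero_add,
      one_add_one_eq_two, ← diagonal_zero, ← fromBlocks_diagonal]
    rfl
  rw [hdiag]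
  exact PosSemidef.diagonal fun i => by cases i <;> simp

theorem SSeq_sylvester {n m1 m2 : ℕ} {α S₀ : Matrix (Fin n) (Fin n) ℂ}
    {ϑ1 : Matrix (Fin n) (Fin m1) ℂ} {ϑ2 : Matrix (Fin n) (Fin m2) ℂ} (hα : IsUnit α)
    (h : α * S₀ - S₀ * αᴴ = Complex.I • (ϑ1 * ϑ1ᴴ + ϑ2 * ϑ2ᴴ)) (k : ℕ) :
    α * SSeq α S₀ ϑ1 ϑ2 k - SSeq α S₀ ϑ1 ϑ2 k * αᴴ =
      Complex.I • (LamSeq α ϑ1 ϑ2 k * (LamSeq α ϑ1 ϑ2 k)ᴴ) := by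
  induction k with
  | zero =>
    simpa [SSeq, LamSeq, conjTranspose_fromCols_eq_fromRows_conjTranspose,
      fromCols_mul_fromRows] using h
  | succ k ih => exact sylvester_step hα (jmat_conjTranspose m1 m2) (jmat_mul_jmat m1 m2) ih

/-- If `0, i ∉ σ(α)`, all the matrices `S_k` are positive definite, so the
admissible quadruple generates a well-defined potential `{C_k}`. -/
theorem SSeq_posDef {n m1 m2 : ℕ}
    (α S₀ : Matrix (Fin n) (Fin n) ℂ)
    (ϑ1 : Matrix (Fin n) (Fin m1) ℂ) (ϑ2 : Matrix (Fin n) (Fin m2) ℂ)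
    (hadm : Admissible α S₀ ϑ1 ϑ2)
    (h0 : (0 : ℂ) ∉ spectrum ℂ α) (hi : Complex.I ∉ spectrum ℂ α) :
    ∀ k : ℕ, (SSeq α S₀ ϑ1 ϑ2 k).PosDef := by
  have hα : IsUnit α := (spectrum.zero_notMem_iff ℂ).mp h0
  intro k
  induction k with
  | zero => exact hadm.1
  | succ k ih =>
    exact posDef_sylvester_step hα hi ih (posSemidef_jmat_add_one m1 m2)
      (SSeq_sylvester hα hadm.2 k)

end
end

section
/- Let α be an n×n complex matrix and ϑ an n×m complex matrix such that the pair {α, ϑ} is controllable. Then the n×n matrix Σ_{ℓ=1}^{n} (α − i I_n)^{n−ℓ} (α + i I_n)^{ℓ−1} ϑ ϑ* (α* − i I_n)^{ℓ−1} (α* + i I_n)^{n−ℓ} is Hermitian positive definite. -/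
/-!
The summand is `Mℓ Mℓᴴ` with `Mℓ = (α - i)^(n-1-ℓ) (α + i)^ℓ ϑ`, so the sum is `K Kᴴ` for the block
row `K = [M₀ ⋯ Mₙ₋₁]`, which is positive definite as soon as the columns of `K` span `ℂⁿ`.
Because `(α + i) - (α - i) = 2i` is invertible, `(α - i)^j (α + i)^s` is a combination of the two
products of degree `j + s + 1`, so by downward induction on `j + s` the span of the products
`(α - i)^(n-1-ℓ) (α + i)^ℓ` contains every `(α + i)^s` with `s < n`, hence `1, α, …, α^(n-1)`.
Thus the columns of `K` span the columns of `ϑ, αϑ, …, α^(n-1)ϑ`, which is everything.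
-/

open Matrix Filter
open scoped ComplexOrder

noncomputable section

section

variable {K R : Type*} [Field K] [Ring R] [Algebra K R]

theorem sub_smul_one_pow_succ_mul_pow (a : R) (l μ : K) (j s : ℕ) :
    (a - l • 1) ^ (j + 1) * (a - μ • 1) ^ s =
      (a - l • 1) ^ j * (a - μ • 1) ^ (s + 1) + (μ - l) • ((a - l • 1) ^ j * (a - μ • 1) ^ s) := by
  have hsplit : a - l • 1 = (a - μ • 1) + (μ - l) • (1 : R) := by
    rw [sub_smul]; abel
  rw [pow_succ, mul_assoc, hsplit, add_mul, smul_one_mul, ← pow_succ', ← hsplit, mul_add,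
    mul_smul_comm]

theorem sub_smul_one_pow_mul_pow_mem_span (a : R) {l μ : K} (h : l ≠ μ) {n j s : ℕ}
    (hjs : j + s < n) :
    (a - l • 1) ^ j * (a - μ • 1) ^ s ∈ Submodule.span K
      (Set.range fun ℓ : Fin n => (a - l • 1) ^ (n - 1 - ℓ) * (a - μ • 1) ^ (ℓ : ℕ)) := by
  obtain ⟨e, he⟩ : ∃ e, j + s + e + 1 = n := ⟨n - (j + s) - 1, by omega⟩
  clear hjs
  induction e generalizing j s with
  | zero => exact Submodule.subset_span ⟨⟨s, by omega⟩, by simp only; congr 2; omega⟩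
  | succ e ih =>
    have hne : μ - l ≠ 0 := sub_ne_zero.mpr h.symm
    rw [← inv_smul_smul₀ hne ((a - l • 1) ^ j * (a - μ • 1) ^ s), eq_sub_of_add_eq'
      (sub_smul_one_pow_succ_mul_pow a l μ j s).symm]
    exact Submodule.smul_mem _ _ (Submodule.sub_mem _ (ih (j := j + 1) (by omega))
      (ih (s := s + 1) (by omega)))

theorem pow_mem_span_sub_smul_one_pow_mul_pow (a : R) {l μ : K} (h : l ≠ μ) {n k : ℕ}
    (hk : k < n) :
    a ^ k ∈ Submodule.span K
      (Set.range fun ℓ : Fin n => (a - l • 1) ^ (n - 1 - ℓ) * (a - μ • 1) ^ (ℓ : ℕ)) := by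
  have hcomm : Commute (a - μ • 1) (μ • 1) := (Commute.one_right _).smul_right μ
  rw [show a ^ k = (a - μ • 1 + μ • 1) ^ k by rw [sub_add_cancel], hcomm.add_pow]
  refine Submodule.sum_mem _ fun i hi => ?_
  have hi : 0 + i < n := by rw [Finset.mem_range] at hi; omega
  rw [smul_pow, one_pow, mul_smul_one, ← nsmul_eq_mul']
  exact Submodule.smul_of_tower_mem _ _ (Submodule.smul_mem _ _ (by
    simpa using sub_smul_one_pow_mul_pow_mem_span a h hi))

end

namespace Matrix

variable {ι l m n R : Type*} [Fintype m]

theorem vecMul_injective_of_mulVec_surjective [Fintype n] [CommSemiring R] [DecidableEq m]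
    {A : Matrix m n R} (hA : Function.Surjective A.mulVec) : Function.Injective A.vecMul := by
  intro x y hxy
  ext i
  obtain ⟨w, hw⟩ := hA (Pi.single i 1)
  calc x i = x ⬝ᵥ A *ᵥ w := by rw [hw, dotProduct_single_one]
    _ = y ⬝ᵥ A *ᵥ w := by
      rw [dotProduct_mulVec, show x ᵥ* A = y ᵥ* A from hxy, ← dotProduct_mulVec]
    _ = y i := by rw [hw, dotProduct_single_one]

theorem posDef_sum_mul_conjTranspose_self [Fintype n] [Fintype ι] [CommRing R] [PartialOrder R]
    [StarRing R] [StarOrderedRing R] [NoZeroDivisors R] [DecidableEq m] (M : ι → Matrix m n R)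
    (hM : Submodule.span R (Set.range fun p : ι × n => fun r => M p.1 r p.2) = ⊤) :
    (∑ i, M i * (M i)ᴴ).PosDef := by
  let A : Matrix m (ι × n) R := of fun r p => M p.1 r p.2
  have hA : ∑ i, M i * (M i)ᴴ = A * Aᴴ := by
    ext r r'
    simp [A, sum_apply, mul_apply, Fintype.sum_prod_type]
  rw [hA]
  refine PosDef.mul_conjTranspose_self A (vecMul_injective_of_mulVec_surjective ?_)
  rw [← coe_mulVecLin, ← LinearMap.range_eq_top, range_mulVecLin]
  exact hM

theorem col_mul_mem_span_of_mem_span [Fintype ι] [CommSemiring R] {M : ι → Matrix l m R}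
    {P : Matrix l m R} (hP : P ∈ Submodule.span R (Set.range M)) (B : Matrix m n R) (c : n) :
    (fun r => (P * B) r c) ∈
      Submodule.span R (Set.range fun p : ι × n => fun r => (M p.1 * B) r p.2) := by
  obtain ⟨a, rfl⟩ := Submodule.mem_span_range_iff_exists_fun R |>.mp hP
  have hcol : (fun r => ((∑ i, a i • M i) * B) r c) = ∑ i, a i • fun r => (M i * B) r c := by
    ext r
    simp only [Matrix.sum_mul, smul_mul, sum_apply, smul_apply, Finset.sum_apply, Pi.smul_apply]
  rw [hcol]
  exact Submodule.sum_mem _ fun i _ =>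
    Submodule.smul_mem _ _ (Submodule.subset_span ⟨(i, c), rfl⟩)

end Matrix

/-- For a controllable pair `{α, ϑ}`, the matrix
`Σ_{ℓ=1}^n (α − iI)^{n−ℓ} (α + iI)^{ℓ−1} ϑ ϑ* (α* − iI)^{ℓ−1} (α* + iI)^{n−ℓ}`
is positive definite. -/
theorem sum_posDef_of_controllable {n m : ℕ}
    (α : Matrix (Fin n) (Fin n) ℂ) (ϑ : Matrix (Fin n) (Fin m) ℂ)
    (hc : Controllable α ϑ) :
    (∑ ℓ ∈ Finset.range n,
      (α - Complex.I • 1) ^ (n - 1 - ℓ) * (α + Complex.I • 1) ^ ℓ * ϑ * ϑᴴ *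
        (αᴴ - Complex.I • 1) ^ ℓ * (αᴴ + Complex.I • 1) ^ (n - 1 - ℓ)).PosDef := by
  let M : ℕ → Matrix (Fin n) (Fin m) ℂ := fun ℓ =>
    (α - Complex.I • 1) ^ (n - 1 - ℓ) * (α - (-Complex.I) • 1) ^ ℓ * ϑ
  have hterm (ℓ : ℕ) : (α - Complex.I • 1) ^ (n - 1 - ℓ) * (α + Complex.I • 1) ^ ℓ * ϑ * ϑᴴ *
      (αᴴ - Complex.I • 1) ^ ℓ * (αᴴ + Complex.I • 1) ^ (n - 1 - ℓ) = M ℓ * (M ℓ)ᴴ := by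
    simp [M, conjTranspose_mul, conjTranspose_pow, sub_eq_add_neg, Matrix.mul_assoc]
  rw [Finset.sum_congr rfl fun ℓ _ => hterm ℓ,
    ← Fin.sum_univ_eq_sum_range (fun ℓ => M ℓ * (M ℓ)ᴴ)]
  refine posDef_sum_mul_conjTranspose_self (fun ℓ : Fin n => M ℓ) (eq_top_iff.mpr ?_)
  rw [← hc, Submodule.span_le]
  rintro _ ⟨k, hk, c, rfl⟩
  have hI : Complex.I ≠ -Complex.I := by norm_num [Complex.ext_iff]
  exact col_mul_mem_span_of_mem_span (pow_mem_span_sub_smul_one_pow_mul_pow α hI hk) ϑ c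
end
end

section
/- Let α be an n×n complex matrix such that i ∉ σ(α) (so α − i I_n is invertible; note (α − i I_n)* = α* + i I_n is then invertible too) and such that −i(α − α*) is positive semidefinite (equivalently, α − α* = iP for some positive semidefinite P). Then the matrix (α − i I_n)^{−1} (α + i I_n) (α* − i I_n) (α* + i I_n)^{−1} − I_n is positive semidefinite. -/
/-!
With `A = α - i I`, so that `A* = α* + i I`, expanding the products gives
`(α + i I)(α* - i I) - A A* = 2 (-i (α - α*))`. Hence the matrix in question equals
`A⁻¹ (2 (-i (α - α*))) (A⁻¹)*`, a congruence of a positive semidefinite matrix.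
-/

open Matrix Filter
open scoped ComplexOrder

noncomputable section

theorem isUnit_sub_smul_one_of_notMem_spectrum {R A : Type*} [CommRing R] [Ring A] [Algebra R A]
    {r : R} {a : A} (h : r ∉ spectrum R a) : IsUnit (a - r • 1) := by
  rw [spectrum.notMem_iff, Algebra.algebraMap_eq_smul_one] at h
  simpa using h.neg

theorem add_I_smul_mul_sub_sub_I_smul_mul_add {A : Type*} [Ring A] [Algebra ℂ A] (a b : A) :
    (a + Complex.I • 1) * (b - Complex.I • 1) - (a - Complex.I • 1) * (b + Complex.I • 1) =
      (2 : ℂ) • ((-Complex.I) • (a - b)) := by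
  simp only [mul_add, add_mul, mul_sub, sub_mul, smul_mul_assoc, mul_smul_comm, smul_smul,
    Complex.I_mul_I, one_mul, mul_one, smul_sub, smul_add, neg_smul, one_smul, two_smul]
  abel

namespace Matrix

theorem conjTranspose_sub_I_smul_one {n : Type*} [DecidableEq n] (α : Matrix n n ℂ) :
    (α - Complex.I • 1)ᴴ = αᴴ + Complex.I • 1 := by
  simp [sub_eq_add_neg, conjTranspose_smul, Complex.conj_I]

theorem inv_mul_mul_inv_sub_one {n R : Type*} [Fintype n] [DecidableEq n] [CommRing R]
    {A B : Matrix n n R} (hA : IsUnit A) (hB : IsUnit B) (M : Matrix n n R) :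
    A⁻¹ * M * B⁻¹ - 1 = A⁻¹ * (M - A * B) * B⁻¹ := by
  rw [Matrix.mul_sub, Matrix.sub_mul, ← Matrix.mul_assoc,
    nonsing_inv_mul _ ((isUnit_iff_isUnit_det A).1 hA), Matrix.one_mul,
    mul_nonsing_inv _ ((isUnit_iff_isUnit_det B).1 hB)]

end Matrix

/-- If `i ∉ σ(α)` and `−i(α − α*) ≥ 0`, then
`(α − iI)⁻¹ (α + iI) (α* − iI) (α* + iI)⁻¹ − I ≥ 0`. -/
theorem cayley_product_posSemidef {n : ℕ} (α : Matrix (Fin n) (Fin n) ℂ)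
    (hi : Complex.I ∉ spectrum ℂ α)
    (hps : ((-Complex.I) • (α - αᴴ)).PosSemidef) :
    ((α - Complex.I • 1)⁻¹ * (α + Complex.I • 1) * (αᴴ - Complex.I • 1) *
      (αᴴ + Complex.I • 1)⁻¹ - 1).PosSemidef := by
  set A := α - Complex.I • 1
  have hA : IsUnit A := isUnit_sub_smul_one_of_notMem_spectrum hi
  have hAH : Aᴴ = αᴴ + Complex.I • 1 := conjTranspose_sub_I_smul_one α
  have hcongr :
      A⁻¹ * (α + Complex.I • 1) * (αᴴ - Complex.I • 1) * (αᴴ + Complex.I • 1)⁻¹ - 1 =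
        A⁻¹ * ((2 : ℂ) • ((-Complex.I) • (α - αᴴ))) * A⁻¹ᴴ := by
    rw [← hAH, Matrix.mul_assoc _ (α + _),
      inv_mul_mul_inv_sub_one hA ((isUnit_conjTranspose A).2 hA), hAH,
      add_I_smul_mul_sub_sub_I_smul_mul_add, ← hAH, conjTranspose_nonsing_inv]
  rw [hcongr]
  exact (hps.smul (by norm_num)).mul_mul_conjTranspose_same A⁻¹

end
end
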